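/- Let J be a strongly stable ideal and G a J-marked set. For every degree m ≥ α_J, the set V_m is in bijection with the monomials of J_m (each monomial of J of degree m is the head term of exactly one element of V_m); hence |V_m| = dim_K J_m. -/

import Mathlib

open MvPolynomial

/-- Exponent vectors for monomials in `K[x_0, …, x_n]`. -/
abbrev E (n : ℕ) := Fin (n+1) →₀ ℕ

/-- Degree of a monomial (exponent vector). -/
def mdeg {n : ℕ} (m : E n) : ℕ := m.sum fun _ e => e

/-- `M` is the set of monomials of a monomial ideal: closed under multiplication. -/
def UpClosed {n : ℕ} (M : Set (E n)) : Prop := ∀ m ∈ M, ∀ d : E n, m + d ∈ M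

/-- Strongly stable: for `x^α ∈ J`, `i < j`, `x_i ∣ x^α` implies `x^α x_j / x_i ∈ J`. -/
def StronglyStable {n : ℕ} (M : Set (E n)) : Prop :=
  ∀ m ∈ M, ∀ i j : Fin (n+1), i < j → m i ≠ 0 →
    m - Finsupp.single i 1 + Finsupp.single j 1 ∈ M

/-- `B` is the minimal monomial basis of the monomial ideal with monomial set `M`. -/
def IsMinBasis {n : ℕ} (M : Set (E n)) (B : Finset (E n)) : Prop :=
  ↑B ⊆ M ∧ (∀ m ∈ M, ∃ b ∈ B, b ≤ m) ∧ (∀ b ∈ B, ∀ b' ∈ B, b ≤ b' → b = b')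

variable (K : Type*) [Field K]

/-- The monomial ideal `J` with monomial set `M`. -/
noncomputable def Jideal {n : ℕ} (M : Set (E n)) : Ideal (MvPolynomial (Fin (n+1)) K) :=
  Ideal.span ((fun m => monomial m (1:K)) '' M)

/-- The `K`-span `⟨N(J)⟩` of the monomials outside `M`. -/
noncomputable def NSpan {n : ℕ} (M : Set (E n)) : Submodule K (MvPolynomial (Fin (n+1)) K) :=
  Submodule.span K ((fun m => monomial m (1:K)) '' Mᶜ)

/-- A `J`-marked set: for each `b` in the minimal basis `B`, a homogeneous polynomial
`F b = x^b - Σ c_γ x^γ` with head term `x^b` and all other monomials outside `M`. -/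
def IsMarkedSet {n : ℕ} (M : Set (E n)) (B : Finset (E n))
    (F : E n → MvPolynomial (Fin (n+1)) K) : Prop :=
  ∀ b ∈ B, (F b).coeff b = 1 ∧
    F b ∈ homogeneousSubmodule (Fin (n+1)) K (mdeg b) ∧
    ∀ m ∈ (F b).support, m ≠ b → m ∉ M

/-- `S = I ⊕ ⟨N(J)⟩` as `K`-vector spaces, i.e. `N(J)` is a `K`-basis of `S/I`. -/
def IsMarkedBasisIdeal {n : ℕ} (M : Set (E n))
    (I : Ideal (MvPolynomial (Fin (n+1)) K)) : Prop :=
  Submodule.restrictScalars K I ⊓ NSpan K M = ⊥ ∧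
  Submodule.restrictScalars K I ⊔ NSpan K M = ⊤

/-- Hilbert function: `dim_K I_m`. -/
noncomputable def HF {n : ℕ} (I : Ideal (MvPolynomial (Fin (n+1)) K)) (m : ℕ) : ℕ :=
  Module.finrank K ↥(Submodule.restrictScalars K I ⊓ homogeneousSubmodule (Fin (n+1)) K m)

/-- The inductively defined sets `V_m` (as sets of pairs `(δ, α)` representing
`x^δ · f_α`, with head term `x^{δ+α}`): `V_{α_J} = G_{α_J}`, and `g_β = x_i · g_ε ∈ V_m`
where `x_i = min(x^β)` and `g_ε ∈ V_{m-1}` has head term `x^β / x_i`. -/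
inductive IsV {n : ℕ} (B : Finset (E n)) : E n → E n → Prop
  | base (α : E n) (hα : α ∈ B) : IsV B 0 α
  | step (δ α : E n) (i : Fin (n+1)) (h : IsV B δ α)
      (hmin : ∀ j ∈ (δ + α + Finsupp.single i 1).support, i ≤ j) :
      IsV B (δ + Finsupp.single i 1) α

variable {n : ℕ} {K : Type*} [Field K]

/-- One step of the rewriting procedure along the sets `V_m`: cancel the coefficient of
the head term `x^{δ+α}` of an element `x^δ f_α` of some `V_m`. -/
def VRed (B : Finset (E n)) (F : E n → MvPolynomial (Fin (n+1)) K)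
    (h h' : MvPolynomial (Fin (n+1)) K) : Prop :=
  ∃ δ α : E n, IsV B δ α ∧ h.coeff (δ + α) ≠ 0 ∧
    h' = h - (h.coeff (δ + α)) • (monomial δ (1:K) * F α)

/-- The `S`-polynomial `S(f_α, f_α') = x^β f_α − x^{β'} f_{α'}` where
`x^{β+α} = x^{β'+α'} = lcm(x^α, x^{α'})`. -/
noncomputable def Spoly (F : E n → MvPolynomial (Fin (n+1)) K) (α α' : E n) :
    MvPolynomial (Fin (n+1)) K :=
  monomial (α ⊔ α' - α) (1:K) * F α - monomial (α ⊔ α' - α') (1:K) * F α'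

/-- Degree reverse lexicographic order (`x_0 < x_1 < … < x_n`): `δ <_{drl} δ'` iff
`|δ| < |δ'|`, or the degrees agree and the first nonzero entry of `δ' − δ` is negative. -/
def drlLT {n : ℕ} (δ δ' : E n) : Prop :=
  mdeg δ < mdeg δ' ∨ (mdeg δ = mdeg δ' ∧ ∃ i, δ' i < δ i ∧ ∀ j < i, δ j = δ' j)

/-- The order `≺_m` on `W_m`: `x^δ f_α ≺_m x^{δ'} f_{α'}` iff `δ <_{drl} δ'`, or
`δ = δ'` and `Ht(f_α) < Ht(f_{α'})` for a fixed term order `lt`. -/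
def PairLT {n : ℕ} (lt : E n → E n → Prop) (p q : E n × E n) : Prop :=
  drlLT p.1 q.1 ∨ (p.1 = q.1 ∧ lt p.2 q.2)

/-- `⪰_m`:  greater or equal for the order on `W_m`. -/
def PairGE {n : ℕ} (lt : E n → E n → Prop) (p q : E n × E n) : Prop :=
  PairLT lt q p ∨ p = q

lemma mdeg_eq_degree {n : ℕ} (m : E n) : mdeg m = m.degree := by
  simp [mdeg, Finsupp.degree, Finsupp.sum]; rfl

lemma mdeg_eq_sum {n : ℕ} (m : E n) : mdeg m = ∑ i, m i :=
  Finsupp.sum_fintype _ _ (fun _ => rfl)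

lemma mdeg_add {n : ℕ} (a b : E n) : mdeg (a + b) = mdeg a + mdeg b := by
  simp [mdeg_eq_sum, Finsupp.add_apply, Finset.sum_add_distrib]

lemma mdeg_single {n : ℕ} (i : Fin (n+1)) (k : ℕ) : mdeg (Finsupp.single i k) = k := by
  simp [mdeg_eq_sum, Finsupp.single_apply]

lemma sub_single_add {n : ℕ} (δ : E n) (i : Fin (n+1)) (h : δ i ≠ 0) :
    δ - Finsupp.single i 1 + Finsupp.single i 1 = δ := by
  ext j
  simp only [Finsupp.add_apply, Finsupp.tsub_apply, Finsupp.single_apply]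
  rcases eq_or_ne i j with rfl | hij
  · simp; omega
  · simp [hij]

lemma isV_iff {n : ℕ} (B : Finset (E n)) (δ α : E n) :
    IsV B δ α ↔ α ∈ B ∧ ∀ i ∈ δ.support, ∀ j ∈ α.support, i ≤ j := by
  constructor
  · intro h
    induction h with
    | base α hα => simpa using hα
    | step δ α i h hmin ih =>
      refine ⟨ih.1, fun k hk j hj => ?_⟩
      rcases Finset.mem_union.mp (Finsupp.support_add hk) with hk | hk
      · exact ih.2 k hk j hj
      · have : k = i := by
          have := Finsupp.support_single_subset hk
          simpa using this
        subst this
        refine hmin j ?_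
        rw [Finsupp.mem_support_iff] at hj ⊢
        simp only [Finsupp.add_apply]
        omega
  · rintro ⟨hα, hcond⟩
    -- induction on mdeg δ
    generalize hd : mdeg δ = d
    induction d using Nat.strong_induction_on generalizing δ with
    | _ d ih =>
      rcases eq_or_ne δ 0 with rfl | hδ
      · exact IsV.base α hα
      · have hsupp : δ.support.Nonempty := Finsupp.support_nonempty_iff.mpr hδ
        set i := δ.support.min' hsupp with hi
        have hmem : i ∈ δ.support := δ.support.min'_mem hsupp
        have hine : δ i ≠ 0 := Finsupp.mem_support_iff.mp hmem
        have hδ' : δ - Finsupp.single i 1 + Finsupp.single i 1 = δ :=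
          sub_single_add δ i hine
        have hsub : (δ - Finsupp.single i 1).support ⊆ δ.support := by
          intro k hk
          rw [Finsupp.mem_support_iff] at hk ⊢
          simp only [Finsupp.tsub_apply] at hk
          omega
        have hdeg : mdeg (δ - Finsupp.single i 1) < d := by
          subst hd
          have h2 := mdeg_add (δ - Finsupp.single i 1) (Finsupp.single i 1)
          rw [hδ', mdeg_single] at h2
          omega
        have hIsV : IsV B (δ - Finsupp.single i 1) α := by
          refine ih _ hdeg _ (fun k hk j hj => hcond k (hsub hk) j hj) rfl
        have := IsV.step _ _ i hIsV ?_
        · rwa [hδ'] at this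
        · intro j hj
          rw [Finsupp.mem_support_iff] at hj
          simp only [Finsupp.add_apply, Finsupp.tsub_apply, Finsupp.single_apply] at hj
          rcases eq_or_ne i j with rfl | hij
          · exact le_refl i
          · simp only [if_neg hij] at hj
            rcases Nat.eq_zero_or_pos (δ j) with h0 | hpos
            · have : α j ≠ 0 := by omega
              exact hcond i hmem j (Finsupp.mem_support_iff.mpr this)
            · exact δ.support.min'_le j (Finsupp.mem_support_iff.mpr (by omega))

lemma support_subset_of_add {n : ℕ} {a b β : E n} (e : a + b = β) :
    a.support ⊆ β.support := by
  intro k hk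
  rw [Finsupp.mem_support_iff] at hk ⊢
  have := DFunLike.congr_fun e k
  simp only [Finsupp.add_apply] at this
  omega

lemma decomp_unique {n : ℕ} {B : Finset (E n)}
    (hmin : ∀ b ∈ B, ∀ b' ∈ B, b ≤ b' → b = b') (β : E n) :
    ∀ δ1 α1 δ2 α2 : E n, IsV B δ1 α1 → IsV B δ2 α2 →
      δ1 + α1 = β → δ2 + α2 = β → δ1 = δ2 ∧ α1 = α2 := by
  generalize hd : mdeg β = d
  induction d using Nat.strong_induction_on generalizing β with
  | _ d ih =>
  intro δ1 α1 δ2 α2 h1 h2 e1 e2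
  rw [isV_iff] at h1 h2
  obtain ⟨hα1, hc1⟩ := h1
  obtain ⟨hα2, hc2⟩ := h2
  by_cases hz1 : δ1 = 0
  · subst hz1
    rw [zero_add] at e1
    subst e1
    have hle : α2 ≤ α1 := e2 ▸ le_add_self
    have hαeq : α2 = α1 := hmin α2 hα2 α1 hα1 hle
    subst hαeq
    have : δ2 + α2 = 0 + α2 := by rw [zero_add]; exact e2
    exact ⟨(add_right_cancel this).symm, rfl⟩
  · by_cases hz2 : δ2 = 0
    · subst hz2
      rw [zero_add] at e2
      subst e2
      have hle : α1 ≤ α2 := e1 ▸ le_add_self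
      have hαeq : α1 = α2 := hmin α1 hα1 α2 hα2 hle
      subst hαeq
      exact absurd (add_right_cancel (e1.trans (zero_add α1).symm)) hz1
    · have hβne : β ≠ 0 := by
        rintro rfl
        apply hz1
        ext k
        have := DFunLike.congr_fun e1 k
        simp only [Finsupp.add_apply, Finsupp.coe_zero, Pi.zero_apply] at this ⊢
        omega
      have hsupp : β.support.Nonempty := Finsupp.support_nonempty_iff.mpr hβne
      set i := β.support.min' hsupp with hi
      have himem : i ∈ β.support := β.support.min'_mem hsupp
      have hβi : β i ≠ 0 := Finsupp.mem_support_iff.mp himem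
      -- i ∈ support of each δ
      have hkey : ∀ δ α : E n, δ + α = β → δ ≠ 0 →
          (∀ k ∈ δ.support, ∀ j ∈ α.support, k ≤ j) → δ i ≠ 0 := by
        intro δ α e hz hc
        by_contra h0
        obtain ⟨k, hk⟩ := Finsupp.support_nonempty_iff.mpr hz
        have hαi : α i ≠ 0 := by
          have := DFunLike.congr_fun e i
          simp only [Finsupp.add_apply] at this
          omega
        have h1 : k ≤ i := hc k hk i (Finsupp.mem_support_iff.mpr hαi)
        have h2 : i ≤ k := β.support.min'_le k (support_subset_of_add e hk)
        have hki : k = i := le_antisymm h1 h2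
        rw [hki] at hk
        exact Finsupp.mem_support_iff.mp hk h0
      have hδ1i : δ1 i ≠ 0 := hkey δ1 α1 e1 hz1 hc1
      have hδ2i : δ2 i ≠ 0 := hkey δ2 α2 e2 hz2 hc2
      have hsub : ∀ δ α : E n, δ + α = β → δ i ≠ 0 →
          (δ - Finsupp.single i 1) + α = β - Finsupp.single i 1 := by
        intro δ α e hδi
        ext k
        have := DFunLike.congr_fun e k
        simp only [Finsupp.add_apply, Finsupp.tsub_apply] at this ⊢
        rcases eq_or_ne i k with rfl | hik
        · rw [Finsupp.single_eq_same]; omega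
        · rw [Finsupp.single_eq_of_ne' hik]; omega
      have hmd : mdeg (β - Finsupp.single i 1) < d := by
        subst hd
        have h2 := mdeg_add (β - Finsupp.single i 1) (Finsupp.single i 1)
        rw [sub_single_add β i hβi, mdeg_single] at h2
        omega
      have hV1 : IsV B (δ1 - Finsupp.single i 1) α1 := by
        rw [isV_iff]
        refine ⟨hα1, fun k hk j hj => hc1 k ?_ j hj⟩
        rw [Finsupp.mem_support_iff] at hk ⊢
        simp only [Finsupp.tsub_apply] at hk
        omega
      have hV2 : IsV B (δ2 - Finsupp.single i 1) α2 := by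
        rw [isV_iff]
        refine ⟨hα2, fun k hk j hj => hc2 k ?_ j hj⟩
        rw [Finsupp.mem_support_iff] at hk ⊢
        simp only [Finsupp.tsub_apply] at hk
        omega
      obtain ⟨hδeq, hαeq⟩ := ih _ hmd _ rfl _ _ _ _ hV1 hV2
        (hsub δ1 α1 e1 hδ1i) (hsub δ2 α2 e2 hδ2i)
      refine ⟨?_, hαeq⟩
      have : δ1 - Finsupp.single i 1 + Finsupp.single i 1
          = δ2 - Finsupp.single i 1 + Finsupp.single i 1 := by rw [hδeq]
      rwa [sub_single_add δ1 i hδ1i, sub_single_add δ2 i hδ2i] at this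

lemma decomp_exists {n : ℕ} {M : Set (E n)} (hup : UpClosed M)
    (hss : StronglyStable M) {B : Finset (E n)} (hB : IsMinBasis M B) (β : E n) :
    β ∈ M → ∃ δ α : E n, IsV B δ α ∧ δ + α = β := by
  generalize hd : mdeg β = d
  induction d using Nat.strong_induction_on generalizing β with
  | _ d ih =>
  intro hβ
  obtain ⟨b, hbB, hble⟩ := hB.2.1 β hβ
  by_cases hbeq : b = β
  · exact ⟨0, β, IsV.base β (hbeq ▸ hbB), zero_add β⟩
  · set dd := β - b with hdd
    have e : b + dd = β := add_tsub_cancel_of_le hble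
    have hddne : dd ≠ 0 := fun h => hbeq (by rw [← e, h, add_zero])
    have hβne : β ≠ 0 := by
      rintro rfl
      exact hbeq (le_antisymm hble zero_le)
    have hsupp : β.support.Nonempty := Finsupp.support_nonempty_iff.mpr hβne
    set i := β.support.min' hsupp with hi
    have himem : i ∈ β.support := β.support.min'_mem hsupp
    have hβi : β i ≠ 0 := Finsupp.mem_support_iff.mp himem
    -- β - x_i ∈ M
    have hM : β - Finsupp.single i 1 ∈ M := by
      by_cases hdi : dd i = 0
      · -- use strong stability
        have hbi : b i ≠ 0 := by
          have := DFunLike.congr_fun e i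
          simp only [Finsupp.add_apply] at this
          omega
        obtain ⟨j, hj⟩ := Finsupp.support_nonempty_iff.mpr hddne
        have hdj : dd j ≠ 0 := Finsupp.mem_support_iff.mp hj
        have hij : i < j := by
          have h1 : i ≤ j := β.support.min'_le j (support_subset_of_add
            (by rw [add_comm]; exact e) hj)
          have h2 : i ≠ j := fun h => hdj (h ▸ hdi)
          exact lt_of_le_of_ne h1 h2
        have hb' : b - Finsupp.single i 1 + Finsupp.single j 1 ∈ M :=
          hss b (hB.1 hbB) i j hij hbi
        have heq : β - Finsupp.single i 1
            = (b - Finsupp.single i 1 + Finsupp.single j 1) + (dd - Finsupp.single j 1) := by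
          ext k
          have hek := DFunLike.congr_fun e k
          simp only [Finsupp.add_apply, Finsupp.tsub_apply] at hek ⊢
          rcases eq_or_ne i k with rfl | hik
          · have hji : j ≠ i := ne_of_gt hij
            rw [Finsupp.single_eq_same, Finsupp.single_eq_of_ne' hji]
            omega
          · rw [Finsupp.single_eq_of_ne' hik]
            rcases eq_or_ne j k with rfl | hjk
            · rw [Finsupp.single_eq_same]; omega
            · rw [Finsupp.single_eq_of_ne' hjk]; omega
        rw [heq]
        exact hup _ hb' _
      · have heq : β - Finsupp.single i 1 = b + (dd - Finsupp.single i 1) := by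
          ext k
          have hek := DFunLike.congr_fun e k
          simp only [Finsupp.add_apply, Finsupp.tsub_apply] at hek ⊢
          rcases eq_or_ne i k with rfl | hik
          · rw [Finsupp.single_eq_same]; omega
          · rw [Finsupp.single_eq_of_ne' hik]; omega
        rw [heq]
        exact hup b (hB.1 hbB) _
    have hmd : mdeg (β - Finsupp.single i 1) < d := by
      subst hd
      have h2 := mdeg_add (β - Finsupp.single i 1) (Finsupp.single i 1)
      rw [sub_single_add β i hβi, mdeg_single] at h2
      omega
    obtain ⟨δ', α, hV, he⟩ := ih _ hmd _ rfl hM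
    refine ⟨δ' + Finsupp.single i 1, α, ?_, ?_⟩
    · refine IsV.step δ' α i hV ?_
      have hfull : δ' + α + Finsupp.single i 1 = β := by
        rw [he, sub_single_add β i hβi]
      rw [hfull]
      exact fun j hj => β.support.min'_le j hj
    · rw [add_right_comm, he, sub_single_add β i hβi]

lemma mem_span_monomials (S : Set (E n)) (p : MvPolynomial (Fin (n+1)) K) :
    p ∈ Submodule.span K ((fun m => monomial m (1:K)) '' S) ↔ ∀ d ∈ p.support, d ∈ S := by
  classical
  constructor
  · intro hp
    induction hp using Submodule.span_induction with
    | mem x hx =>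
      obtain ⟨m, hm, rfl⟩ := hx
      intro d hd
      rw [MvPolynomial.support_monomial] at hd
      simp only [one_ne_zero, if_false] at hd
      rwa [Finset.mem_singleton.mp hd]
    | zero => simp
    | add x y hx hy ihx ihy =>
      intro d hd
      rcases Finset.mem_union.mp (MvPolynomial.support_add hd) with h | h
      · exact ihx d h
      · exact ihy d h
    | smul a x hx ihx =>
      intro d hd
      exact ihx d (MvPolynomial.support_smul hd)
  · intro hp
    rw [p.as_sum]
    refine Submodule.sum_mem _ fun v hv => ?_
    have : monomial v (coeff v p) = (coeff v p) • monomial v (1:K) := by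
      rw [MvPolynomial.smul_monomial, smul_eq_mul, mul_one]
    rw [this]
    exact Submodule.smul_mem _ _ (Submodule.subset_span ⟨v, hp v hv, rfl⟩)

lemma mem_Jideal_iff {M : Set (E n)} (hup : UpClosed M) (p : MvPolynomial (Fin (n+1)) K) :
    p ∈ Jideal K M ↔ ∀ d ∈ p.support, d ∈ M := by
  classical
  constructor
  · intro hp
    induction hp using Submodule.span_induction with
    | mem x hx =>
      obtain ⟨m, hm, rfl⟩ := hx
      intro d hd
      rw [MvPolynomial.support_monomial] at hd
      simp only [one_ne_zero, if_false] at hd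
      rwa [Finset.mem_singleton.mp hd]
    | zero => simp
    | add x y hx hy ihx ihy =>
      intro d hd
      rcases Finset.mem_union.mp (MvPolynomial.support_add hd) with h | h
      · exact ihx d h
      · exact ihy d h
    | smul a x hx ihx =>
      intro d hd
      rw [smul_eq_mul] at hd
      obtain ⟨v, hv, w, hw, rfl⟩ := Finset.mem_add.mp (MvPolynomial.support_mul a x hd)
      have := hup w (ihx w hw) v
      rwa [add_comm] at this
  · intro hp
    have h1 : p ∈ Submodule.span K ((fun m => monomial m (1:K)) '' M) :=
      (mem_span_monomials M p).mpr hp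
    have h2 : Submodule.span K ((fun m => monomial m (1:K)) '' M) ≤
        Submodule.restrictScalars K (Jideal K M) :=
      Submodule.span_le.mpr fun x hx => Submodule.subset_span hx
    exact h2 h1

lemma graded_piece (M : Set (E n)) (hup : UpClosed M) (m : ℕ) :
    Submodule.restrictScalars K (Jideal K M) ⊓ homogeneousSubmodule (Fin (n+1)) K m =
      Submodule.span K ((fun β => monomial β (1:K)) '' {β | β ∈ M ∧ mdeg β = m}) := by
  apply le_antisymm
  · intro p hp
    rw [Submodule.mem_inf] at hp
    obtain ⟨hp1, hp2⟩ := hp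
    rw [Submodule.restrictScalars_mem] at hp1
    rw [mem_homogeneousSubmodule] at hp2
    rw [mem_span_monomials]
    intro d hd
    refine ⟨(mem_Jideal_iff hup p).mp hp1 d hd, ?_⟩
    rw [mdeg_eq_degree, Finsupp.degree_eq_weight_one]
    exact hp2 (MvPolynomial.mem_support_iff.mp hd)
  · rw [Submodule.span_le]
    rintro x ⟨β, ⟨hβM, hβd⟩, rfl⟩
    rw [SetLike.mem_coe, Submodule.mem_inf]
    constructor
    · exact Submodule.subset_span ⟨β, hβM, rfl⟩
    · rw [mem_homogeneousSubmodule]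
      exact isHomogeneous_monomial _ (by rw [← mdeg_eq_degree, hβd])

lemma HF_eq_ncard (M : Set (E n)) (hup : UpClosed M) (m : ℕ) :
    HF K (Jideal K M) m = Set.ncard {β | β ∈ M ∧ mdeg β = m} := by
  set Mm : Set (E n) := {β | β ∈ M ∧ mdeg β = m} with hMm
  have hfin : Mm.Finite := by
    refine (Finsupp.finite_of_degree_le m).subset fun β hβ => ?_
    rw [Set.mem_setOf_eq, ← mdeg_eq_degree]
    exact le_of_eq hβ.2
  haveI : Fintype Mm := hfin.fintype
  rw [HF, graded_piece M hup m]
  have hli : LinearIndependent K (fun β : Mm => monomial (β : E n) (1:K)) := by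
    have := (basisMonomials (Fin (n+1)) K).linearIndependent
    rw [coe_basisMonomials] at this
    exact this.comp ((↑) : Mm → E n) Subtype.val_injective
  have hrange : (fun β => monomial β (1:K)) '' Mm
      = Set.range (fun β : Mm => monomial (β : E n) (1:K)) :=
    Set.image_eq_range _ _
  rw [hrange, finrank_span_eq_card hli, ← Nat.card_coe_set_eq, Nat.card_eq_fintype_card]

/-- For `J` strongly stable, every monomial of `J` of degree `m` is the head term of
exactly one element of `V_m`; hence `|V_m| = dim_K J_m` for every `m`. -/
theorem stmt13 {n : ℕ} {K : Type*} [Field K] (M : Set (E n)) (hup : UpClosed M)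
    (hss : StronglyStable M) (B : Finset (E n)) (hB : IsMinBasis M B) :
    (∀ β ∈ M, ∃! p : E n × E n, IsV B p.1 p.2 ∧ p.1 + p.2 = β) ∧
    ∀ m : ℕ,
      Set.ncard {p : E n × E n | IsV B p.1 p.2 ∧ mdeg (p.1 + p.2) = m} =
        HF K (Jideal K M) m := by
  have hmin := hB.2.2
  constructor
  · intro β hβ
    obtain ⟨δ, α, hV, he⟩ := decomp_exists hup hss hB β hβ
    refine ⟨(δ, α), ⟨hV, he⟩, ?_⟩
    rintro ⟨δ', α'⟩ ⟨hV', he'⟩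
    obtain ⟨h1, h2⟩ := decomp_unique hmin β δ' α' δ α hV' hV he' he
    simp [Prod.ext_iff, h1, h2]
  · intro m
    have himg : (fun p : E n × E n => p.1 + p.2) ''
        {p : E n × E n | IsV B p.1 p.2 ∧ mdeg (p.1 + p.2) = m}
        = {β | β ∈ M ∧ mdeg β = m} := by
      ext β
      constructor
      · rintro ⟨⟨δ, α⟩, ⟨hV, hm⟩, rfl⟩
        have hα : α ∈ B := ((isV_iff B δ α).mp hV).1
        have hmem : α + δ ∈ M := hup α (hB.1 (Finset.mem_coe.mpr hα)) δ
        exact ⟨by rwa [add_comm] at hmem, hm⟩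
      · rintro ⟨hβM, hβm⟩
        obtain ⟨δ, α, hV, he⟩ := decomp_exists hup hss hB β hβM
        exact ⟨(δ, α), ⟨hV, by rw [he]; exact hβm⟩, he⟩
    have hinj : Set.InjOn (fun p : E n × E n => p.1 + p.2)
        {p : E n × E n | IsV B p.1 p.2 ∧ mdeg (p.1 + p.2) = m} := by
      rintro ⟨δ1, α1⟩ ⟨h1, _⟩ ⟨δ2, α2⟩ ⟨h2, _⟩ he
      obtain ⟨e1, e2⟩ := decomp_unique hmin (δ1 + α1) δ1 α1 δ2 α2 h1 h2 rfl he.symm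
      simp [Prod.ext_iff, e1, e2]
    rw [HF_eq_ncard M hup m, ← himg, Set.ncard_image_of_injOn hinj]
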